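/- Suppose that for some constants C ∈ ℝ and p₂ > 0, the inequality μ ∫_Ω u²/|x|² dx ≤ ∫_Ω p(x)|∇u|² dx − C ∫_Ω u² dx holds for all u ∈ H^1_0(Ω), where p is measurable with 0 < p(x) ≤ p₂ on Ω and B(0, τ₀) ⊂ Ω for some τ₀ > 0. Then μ ≤ p₂ (n-2)²/4. -/

import Mathlib

open MeasureTheory Set
section HcoAux
open Real Filter Topology
open MeasureTheory Set Real Filter Topology

noncomputable def hcoBump : ContDiffBump (0:ℝ) := ⟨1, 2, one_pos, one_lt_two⟩

lemma hco_integral_Ioi (f : ℝ → ℝ) :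
    ∫ r in Ioi (0:ℝ), f r = ∫ t : ℝ, Real.exp t * f (Real.exp t) := by
  have h := integral_image_eq_integral_abs_deriv_smul MeasurableSet.univ
    (fun x _ => (Real.hasDerivAt_exp x).hasDerivWithinAt) Real.exp_injective.injOn f
  simpa [image_univ, Real.range_exp, abs_of_pos (Real.exp_pos _)] using h

lemma hco_integral_comp_affine (f : ℝ → ℝ) (L T : ℝ) :
    ∫ t : ℝ, f ((t + L) / T) = |T| * ∫ s : ℝ, f s := by
  calc ∫ t : ℝ, f ((t + L) / T) = ∫ t : ℝ, (fun s => f (s / T)) (t + L) := rfl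
    _ = ∫ t : ℝ, f (t / T) := integral_add_right_eq_self (fun s => f (s / T)) L
    _ = |T| * ∫ s : ℝ, f s := by rw [Measure.integral_comp_div]; simp

lemma hco_integrable {f : ℝ → ℝ} (hf : Continuous f) {A : ℝ} (h : ∀ x, A < |x| → f x = 0) :
    Integrable f := by
  refine hf.integrable_of_hasCompactSupport
    (HasCompactSupport.intro (isCompact_closedBall (0:ℝ) A) (fun x hx => h x ?_))
  have := mem_closedBall_zero_iff.not.mp hx
  rw [Real.norm_eq_abs] at this; linarith [not_le.mp this]

noncomputable def hcoS : ℝ := ∫ s : ℝ, (hcoBump s)^2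

lemma hco_psi_zero {s : ℝ} (h : 2 ≤ |s|) : hcoBump s = 0 := by
  have := hcoBump.support_eq
  by_contra hne
  have hs : s ∈ Function.support hcoBump := hne
  rw [this, Metric.mem_ball, Real.dist_eq, sub_zero] at hs
  have hr : hcoBump.rOut = 2 := rfl
  rw [hr] at hs; linarith

lemma hco_psi_deriv_zero {s : ℝ} (h : 2 < |s|) : deriv hcoBump s = 0 := by
  by_contra hne
  have hs : s ∈ Function.support (deriv hcoBump) := hne
  have := support_deriv_subset hs
  rw [hcoBump.tsupport_eq, Metric.mem_closedBall, Real.dist_eq, sub_zero] at this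
  have hr : hcoBump.rOut = 2 := rfl
  rw [hr] at this; linarith

lemma hco_S_pos : 2 ≤ hcoS := by
  have hint : Integrable (fun s : ℝ => (hcoBump s)^2) :=
    hco_integrable (hcoBump.continuous.pow 2) (A := 2)
      (fun x hx => by rw [hco_psi_zero hx.le]; ring)
  have h1 : ∫ x in Icc (-1:ℝ) 1, (hcoBump x)^2 = 2 := by
    rw [setIntegral_congr_fun measurableSet_Icc (g := fun _ => (1:ℝ))
      (fun x hx => by
        rw [hcoBump.one_of_mem_closedBall]
        · ring
        · rw [Real.closedBall_eq_Icc]; simpa [show hcoBump.rIn = 1 from rfl] using hx)]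
    simp [Real.volume_Icc]
    norm_num
  calc (2:ℝ) = ∫ x in Icc (-1:ℝ) 1, (hcoBump x)^2 := h1.symm
    _ ≤ hcoS := setIntegral_le_integral hint (Eventually.of_forall (fun x => sq_nonneg _))


lemma hco_pt (n : ℕ) (hn : 3 ≤ n) (t v : ℝ) :
    Real.exp t * (Real.exp t ^ (n-1) * ((Real.exp (-(((n:ℝ)-2)/2)*t) * v)^2 / Real.exp t ^ 2))
      = v^2 := by
  have f1 : Real.exp t ^ (n-1) = Real.exp (((n:ℝ)-1)*t) := by
    rw [← Real.exp_nat_mul]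
    congr 1
    rw [Nat.cast_sub (by omega : 1 ≤ n)]
    push_cast; ring
  have f2 : Real.exp t ^ 2 = Real.exp (2*t) := by
    rw [sq, ← Real.exp_add]; ring_nf
  have f3 : Real.exp (-(((n:ℝ)-2)/2)*t) ^ 2 = Real.exp (-((n:ℝ)-2)*t) := by
    rw [sq, ← Real.exp_add]; ring_nf
  rw [mul_pow, f1, f2, f3, div_eq_mul_inv, ← Real.exp_neg]
  have : Real.exp t * (Real.exp (((n:ℝ)-1)*t) * (Real.exp (-((n:ℝ)-2)*t) * v^2 * Real.exp (-(2*t))))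
      = (Real.exp t * Real.exp (((n:ℝ)-1)*t) * Real.exp (-((n:ℝ)-2)*t) * Real.exp (-(2*t))) * v^2 := by
    ring
  rw [this, ← Real.exp_add, ← Real.exp_add, ← Real.exp_add,
    show t + ((n:ℝ)-1)*t + -((n:ℝ)-2)*t + -(2*t) = 0 by ring, Real.exp_zero, one_mul]

lemma hco_pt3 (n : ℕ) (hn : 3 ≤ n) (t v : ℝ) :
    Real.exp t * (Real.exp t ^ (n-1) * (Real.exp (-(((n:ℝ)-2)/2)*t) * v)^2)
      = Real.exp (2*t) * v^2 := by
  have f1 : Real.exp t ^ (n-1) = Real.exp (((n:ℝ)-1)*t) := by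
    rw [← Real.exp_nat_mul]
    congr 1
    rw [Nat.cast_sub (by omega : 1 ≤ n)]
    push_cast; ring
  have f3 : Real.exp (-(((n:ℝ)-2)/2)*t) ^ 2 = Real.exp (-((n:ℝ)-2)*t) := by
    rw [sq, ← Real.exp_add]; ring_nf
  rw [mul_pow, f1, f3]
  have : Real.exp t * (Real.exp (((n:ℝ)-1)*t) * (Real.exp (-((n:ℝ)-2)*t) * v^2))
      = (Real.exp t * Real.exp (((n:ℝ)-1)*t) * Real.exp (-((n:ℝ)-2)*t)) * v^2 := by ring
  rw [this, ← Real.exp_add, ← Real.exp_add,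
    show t + ((n:ℝ)-1)*t + -((n:ℝ)-2)*t = 2*t by ring]

lemma hco_sq_bound (a d v T : ℝ) (ha : 0 ≤ a) (hT : 1 ≤ T) :
    (-a*v + d/T)^2 ≤ a^2*v^2 + (2*a*|v*d| + d^2)/T := by
  have hT0 : 0 < T := lt_of_lt_of_le one_pos hT
  have expand : (-a*v + d/T)^2 = a^2*v^2 + (-(2*a*(v*d)))/T + d^2/T^2 := by
    field_simp; ring
  have h1 : (-(2*a*(v*d)))/T ≤ (2*a*|v*d|)/T := by
    gcongr
    nlinarith [neg_le_abs (v*d)]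
  have h2 : d^2/T^2 ≤ d^2/T := by
    apply div_le_div_of_nonneg_left (sq_nonneg d) hT0
    nlinarith
  have h3 : (2*a*|v*d| + d^2)/T = (2*a*|v*d|)/T + d^2/T := add_div _ _ _
  linarith

noncomputable def hcoK (a : ℝ) : ℝ :=
  ∫ s : ℝ, (2*a*|hcoBump s * deriv hcoBump s| + (deriv hcoBump s)^2)

lemma hco_K_nonneg {a : ℝ} (ha : 0 ≤ a) : 0 ≤ hcoK a :=
  integral_nonneg (fun s => by positivity)

set_option maxHeartbeats 2000000 in
lemma hco_key (n : ℕ) (hn : 3 ≤ n)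
    (Ω : Set (EuclideanSpace ℝ (Fin n))) (hΩo : IsOpen Ω)
    (μ C p₂ τ₀ : ℝ) (hp₂ : 0 < p₂) (hτ₀ : 0 < τ₀)
    (hball : Metric.ball (0 : EuclideanSpace ℝ (Fin n)) τ₀ ⊆ Ω)
    (p : EuclideanSpace ℝ (Fin n) → ℝ) (hpm : Measurable p)
    (hp : ∀ x ∈ Ω, 0 < p x ∧ p x ≤ p₂)
    (hineq : ∀ u : EuclideanSpace ℝ (Fin n) → ℝ,
      ContDiff ℝ 1 u → HasCompactSupport u → tsupport u ⊆ Ω →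
      μ * (∫ x in Ω, (u x) ^ 2 / ‖x‖ ^ 2)
        ≤ (∫ x in Ω, p x * ‖gradient u x‖ ^ 2) - C * ∫ x in Ω, (u x) ^ 2)
    (T : ℝ) (hT : 1 ≤ T) :
    μ ≤ p₂ * (((n:ℝ)-2)/2)^2
        + (p₂ * (hcoK (((n:ℝ)-2)/2) / hcoS) + |C|) / T := by
  have hT0 : (0:ℝ) < T := lt_of_lt_of_le one_pos hT
  set α : ℝ := ((n:ℝ)-2)/2 with hα_def
  have hn3 : (3:ℝ) ≤ (n:ℝ) := by exact_mod_cast hn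
  have hα : (1:ℝ)/2 ≤ α := by rw [hα_def]; linarith
  have hα0 : 0 ≤ α := by linarith
  set ψ : ℝ → ℝ := fun s => hcoBump s with hψ_def
  set m : ℝ := min τ₀ 1 / 2 with hm_def
  have hm0 : 0 < m := by positivity
  have hm1 : m ≤ 1/2 := by
    rw [hm_def]; have := min_le_right τ₀ 1; linarith
  have hmτ : m < τ₀ := by
    rw [hm_def]; have := min_le_left τ₀ 1; linarith
  set L : ℝ := 3*T - Real.log m with hL_def
  have hlogm : Real.log m < 0 := Real.log_neg hm0 (by linarith)
  have hL3 : 3*T ≤ L := by rw [hL_def]; linarith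
  set G : ℝ → ℝ := fun t => Real.exp (-α*t) * ψ ((t+L)/T) with hG_def
  set D : ℝ → ℝ := fun t =>
    Real.exp (-α*t) * (-α * ψ ((t+L)/T) + deriv ψ ((t+L)/T) / T) with hD_def
  set u : EuclideanSpace ℝ (Fin n) → ℝ := fun x => G (Real.log ‖x‖) with hu_def
  -- derivative of G
  have hψdiff : Differentiable ℝ ψ := (hcoBump.contDiff (n := 1)).differentiable (by norm_num)
  have hψ'cont : Continuous (deriv ψ) := (hcoBump.contDiff (n := 2)).continuous_deriv (by norm_num)
  have hGd : ∀ t, HasDerivAt G (D t) t := by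
    intro t
    have h1 : HasDerivAt (fun t : ℝ => Real.exp (-α*t)) (Real.exp (-α*t) * (-α)) t := by
      simpa using (((hasDerivAt_id t).const_mul (-α)).exp)
    have haff : HasDerivAt (fun t : ℝ => (t+L)/T) (1/T) t := by
      simpa using ((hasDerivAt_id t).add_const L).div_const T
    have hcomp : HasDerivAt (fun t : ℝ => ψ ((t+L)/T)) (deriv ψ ((t+L)/T) * (1/T)) t :=
      (hψdiff _).hasDerivAt.comp t haff
    have := h1.mul hcomp
    exact this.congr_deriv (by rw [hD_def]; ring)
  -- ψ composition vanishing
  have hψz : ∀ t : ℝ, 2*T ≤ |t + L| → ψ ((t+L)/T) = 0 := by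
    intro t h
    apply hco_psi_zero
    rw [abs_div, abs_of_pos hT0, le_div_iff₀ hT0]
    linarith
  have hψz' : ∀ t : ℝ, 2*T < |t + L| → deriv ψ ((t+L)/T) = 0 := by
    intro t h
    apply hco_psi_deriv_zero
    rw [abs_div, abs_of_pos hT0, lt_div_iff₀ hT0]
    linarith
  -- u vanishes near 0
  have hargz : ∀ x : EuclideanSpace ℝ (Fin n), ‖x‖ < Real.exp (-(L + 2*T)) →
      ψ ((Real.log ‖x‖ + L)/T) = 0 := by
    intro x hx
    rcases eq_or_ne x 0 with rfl | hx0
    · apply hψz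
      rw [norm_zero, Real.log_zero, zero_add, abs_of_nonneg (by linarith)]
      linarith
    · have hx0' : 0 < ‖x‖ := norm_pos_iff.mpr hx0
      have hlt : Real.log ‖x‖ < -(L + 2*T) := by
        calc Real.log ‖x‖ < Real.log (Real.exp (-(L + 2*T))) := Real.log_lt_log hx0' hx
          _ = -(L + 2*T) := Real.log_exp _
      apply hψz
      rw [abs_of_nonpos (by linarith)]
      linarith
  have huz : ∀ x : EuclideanSpace ℝ (Fin n), ‖x‖ < Real.exp (-(L + 2*T)) → u x = 0 := by
    intro x hx
    rw [hu_def]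
    simp only [hG_def]
    rw [hargz x hx, mul_zero]
  -- u vanishes far away
  have huR : ∀ x : EuclideanSpace ℝ (Fin n), Real.exp (2*T - L) < ‖x‖ → u x = 0 := by
    intro x hx
    have hlt : 2*T - L < Real.log ‖x‖ := by
      calc 2*T - L = Real.log (Real.exp (2*T - L)) := (Real.log_exp _).symm
        _ < Real.log ‖x‖ := Real.log_lt_log (Real.exp_pos _) hx
    rw [hu_def]
    simp only [hG_def]
    rw [hψz _ (by rw [abs_of_nonneg (by linarith)]; linarith), mul_zero]
  have hGsm : ContDiff ℝ 1 G := by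
    apply ContDiff.mul
    · exact Real.contDiff_exp.comp (contDiff_const.mul contDiff_id)
    · exact (hcoBump.contDiff (n := 1)).comp ((contDiff_id.add contDiff_const).div_const T)
  have hu_smooth : ContDiff ℝ 1 u := by
    rw [contDiff_iff_contDiffAt]
    intro x
    rcases lt_or_ge ‖x‖ (Real.exp (-(L + 2*T))) with hx | hx
    · refine (contDiffAt_const (c := (0:ℝ))).congr_of_eventuallyEq ?_
      have hop : IsOpen {y : EuclideanSpace ℝ (Fin n) | ‖y‖ < Real.exp (-(L + 2*T))} :=
        isOpen_lt continuous_norm continuous_const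
      filter_upwards [hop.mem_nhds hx] with y hy
      exact huz y hy
    · have hx0 : x ≠ 0 := by
        intro h; rw [h, norm_zero] at hx; exact absurd hx (not_le.mpr (Real.exp_pos _))
      exact hGsm.contDiffAt.comp x
        ((Real.contDiffAt_log.mpr (norm_ne_zero_iff.mpr hx0)).comp x (contDiffAt_norm ℝ hx0))
  have hu_compact : HasCompactSupport u := by
    apply HasCompactSupport.intro
      (isCompact_closedBall (0 : EuclideanSpace ℝ (Fin n)) (Real.exp (2*T - L)))
    intro x hx
    apply huR
    have := mem_closedBall_zero_iff.not.mp hx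
    exact not_le.mp this
  have hRm : Real.exp (2*T - L) < τ₀ := by
    have h1 : Real.exp (2*T - L) = Real.exp (-T) * m := by
      rw [hL_def, show 2*T - (3*T - Real.log m) = -T + Real.log m by ring, Real.exp_add,
        Real.exp_log hm0]
    rw [h1]
    calc Real.exp (-T) * m ≤ 1 * m := by
          apply mul_le_mul_of_nonneg_right _ hm0.le
          rw [← Real.exp_zero]
          exact Real.exp_le_exp.mpr (by linarith)
      _ = m := one_mul m
      _ < τ₀ := hmτ
  have hu_in : tsupport u ⊆ Ω := by
    have h1 : tsupport u ⊆
        Metric.closedBall (0 : EuclideanSpace ℝ (Fin n)) (Real.exp (2*T - L)) := by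
      apply closure_minimal _ Metric.isClosed_closedBall
      intro x hx
      rw [Function.mem_support] at hx
      by_contra hmem
      rw [Metric.mem_closedBall, dist_zero_right, not_le] at hmem
      exact hx (huR x hmem)
    refine h1.trans (subset_trans ?_ hball)
    intro y hy
    rw [Metric.mem_closedBall, dist_zero_right] at hy
    rw [Metric.mem_ball, dist_zero_right]
    exact lt_of_le_of_lt hy hRm
  -- gradient identity
  have hgradzero : ∀ x : EuclideanSpace ℝ (Fin n), x ∉ tsupport u → gradient u x = 0 := by
    intro x hx
    have hev : u =ᶠ[𝓝 x] (fun _ => (0:ℝ)) := by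
      filter_upwards [(isClosed_tsupport u).isOpen_compl.mem_nhds hx] with y hy
      exact image_eq_zero_of_notMem_tsupport hy
    rw [hev.gradient_eq, gradient_fun_const]
  have hgradeq : ∀ x : EuclideanSpace ℝ (Fin n),
      ‖gradient u x‖^2 = (D (Real.log ‖x‖))^2 / ‖x‖^2 := by
    intro x
    rcases eq_or_ne x 0 with rfl | hx0
    · have h0 : gradient u (0 : EuclideanSpace ℝ (Fin n)) = 0 := by
        have hev : u =ᶠ[𝓝 (0 : EuclideanSpace ℝ (Fin n))] (fun _ => (0:ℝ)) := by
          filter_upwards [Metric.ball_mem_nhds (0 : EuclideanSpace ℝ (Fin n))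
            (Real.exp_pos (-(L + 2*T)))] with y hy
          exact huz y (by simpa [Metric.mem_ball, dist_zero_right] using hy)
        rw [hev.gradient_eq, gradient_fun_const]
      rw [h0]
      simp
    · have hxn : ‖x‖ ≠ 0 := norm_ne_zero_iff.mpr hx0
      have hx2 : (0:ℝ) < ‖x‖^2 := by positivity
      set W : ℝ → ℝ := fun s => G (Real.log s / 2) with hW_def
      have hlogsq : Real.log (‖x‖^2) / 2 = Real.log ‖x‖ := by
        rw [Real.log_pow]; push_cast; ring
      have huW : u = fun y => W (‖y‖^2) := by
        funext y
        show G (Real.log ‖y‖) = G (Real.log (‖y‖^2) / 2)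
        have hly : Real.log (‖y‖^2) / 2 = Real.log ‖y‖ := by
          rw [Real.log_pow]; push_cast; ring
        rw [hly]
      have hlogd : HasDerivAt (fun s : ℝ => Real.log s / 2) ((‖x‖^2)⁻¹/2) (‖x‖^2) :=
        (Real.hasDerivAt_log hx2.ne').div_const 2
      have hGd' : HasDerivAt G (D (Real.log ‖x‖)) ((fun s : ℝ => Real.log s / 2) (‖x‖^2)) := by
        simpa only [hlogsq] using hGd (Real.log ‖x‖)
      have hWd : HasDerivAt W (D (Real.log ‖x‖) * ((‖x‖^2)⁻¹/2)) (‖x‖^2) :=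
        by have := hGd'.comp (‖x‖^2) hlogd; exact this
      have hq : HasFDerivAt (fun y : EuclideanSpace ℝ (Fin n) => ‖y‖^2)
          (2 • (innerSL ℝ x)) x := (hasStrictFDerivAt_norm_sq x).hasFDerivAt
      have hfd : HasFDerivAt u
          ((D (Real.log ‖x‖) * ((‖x‖^2)⁻¹/2)) • (2 • (innerSL ℝ x))) x := by
        rw [huW]
        exact hWd.comp_hasFDerivAt x hq
      have hgn : ‖gradient u x‖ = ‖fderiv ℝ u x‖ := by
        show ‖(InnerProductSpace.toDual ℝ _).symm (fderiv ℝ u x)‖ = ‖fderiv ℝ u x‖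
        exact LinearIsometryEquiv.norm_map _ _
      rw [hgn, hfd.fderiv]
      have hsm : (D (Real.log ‖x‖) * ((‖x‖^2)⁻¹/2)) • (2 • (innerSL ℝ x))
          = (D (Real.log ‖x‖) * ((‖x‖^2)⁻¹/2) * 2) • (innerSL ℝ x) := by
        rw [← Nat.cast_smul_eq_nsmul ℝ 2 (innerSL ℝ x), smul_smul]
        norm_num
      rw [hsm, norm_smul, innerSL_apply_norm, Real.norm_eq_abs, mul_pow, sq_abs]
      field_simp
  -- continuity and integrability of the gradient square
  have hgradcont : Continuous (fun x : EuclideanSpace ℝ (Fin n) => ‖gradient u x‖^2) := by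
    have h1 : Continuous (fun x => fderiv ℝ u x) := hu_smooth.continuous_fderiv (by norm_num)
    have h2 : Continuous (fun x : EuclideanSpace ℝ (Fin n) => gradient u x) := by
      show Continuous fun x : EuclideanSpace ℝ (Fin n) =>
        (InnerProductSpace.toDual ℝ (EuclideanSpace ℝ (Fin n))).symm (fderiv ℝ u x)
      exact (LinearIsometryEquiv.continuous _).comp h1
    exact h2.norm.pow 2
  have hgradsupp : HasCompactSupport (fun x : EuclideanSpace ℝ (Fin n) => ‖gradient u x‖^2) := by
    apply HasCompactSupport.intro hu_compact
    intro x hx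
    rw [hgradzero x hx]
    simp
  have hgradint : Integrable (fun x : EuclideanSpace ℝ (Fin n) => ‖gradient u x‖^2) :=
    hgradcont.integrable_of_hasCompactSupport hgradsupp
  -- nontriviality and polar coordinates
  haveI : Nontrivial (EuclideanSpace ℝ (Fin n)) :=
    Module.nontrivial_of_finrank_pos (R := ℝ)
      (by rw [finrank_euclideanSpace_fin]; omega)
  set c : ℝ := (n : ℝ) * (volume (Metric.ball (0 : EuclideanSpace ℝ (Fin n)) 1)).toReal
    with hc_def
  have hcpos : 0 < c := by
    apply mul_pos (by linarith)
    apply ENNReal.toReal_pos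
    · exact (Metric.measure_ball_pos volume 0 one_pos).ne'
    · exact measure_ball_lt_top.ne
  have hpolar : ∀ f : ℝ → ℝ, (∫ x : EuclideanSpace ℝ (Fin n), f ‖x‖)
      = c * ∫ r in Ioi (0:ℝ), (r^(n-1)) * f r := by
    intro f
    have h := integral_fun_norm_addHaar (volume : Measure (EuclideanSpace ℝ (Fin n))) f
    rw [finrank_euclideanSpace_fin] at h
    rw [h, hc_def]
    simp only [nsmul_eq_mul, smul_eq_mul, measureReal_def]
    ring
  -- bump facts
  have hψcont : Continuous ψ := hcoBump.continuous
  have hψzero : ∀ s : ℝ, 2 ≤ |s| → ψ s = 0 := fun s h => hco_psi_zero h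
  have hψ'zero : ∀ s : ℝ, 2 < |s| → deriv ψ s = 0 := fun s h => hco_psi_deriv_zero h
  have hψne : ∀ s : ℝ, ψ s ≠ 0 → |s| < 2 := by
    intro s hs
    by_contra h
    exact hs (hco_psi_zero (not_lt.mp h))
  -- the 1D profile P
  set P : ℝ → ℝ := fun t => -α * ψ ((t+L)/T) + deriv ψ ((t+L)/T) / T with hP_def
  have hAff : Continuous (fun t : ℝ => (t+L)/T) :=
    (continuous_id.add continuous_const).div_const T
  have hPcont : Continuous P :=
    ((continuous_const.mul (hψcont.comp hAff))).add ((hψ'cont.comp hAff).div_const T)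
  have habs : ∀ t : ℝ, 2*T + |L| < |t| → 2*T < |t + L| := by
    intro t ht
    have : |t| ≤ |t + L| + |L| := by
      calc |t| = |(t + L) + (-L)| := by ring_nf
        _ ≤ |t + L| + |(-L)| := abs_add_le _ _
        _ = |t + L| + |L| := by rw [abs_neg]
    linarith
  have hP2int : Integrable (fun t : ℝ => (P t)^2) := by
    apply hco_integrable (hPcont.pow 2) (A := 2*T + |L|)
    intro t ht
    have h2 := habs t ht
    show (-α * ψ ((t+L)/T) + deriv ψ ((t+L)/T) / T)^2 = 0
    rw [hψz t h2.le, hψz' t h2, mul_zero, zero_div, add_zero]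
    ring
  -- the comparison function
  set Q : ℝ → ℝ := fun s => α^2 * ψ s^2 + (2*α*|ψ s * deriv ψ s| + (deriv ψ s)^2)/T
    with hQ_def
  have hQcont : Continuous Q := by
    apply Continuous.add
    · exact continuous_const.mul (hψcont.pow 2)
    · exact (((continuous_const.mul ((hψcont.mul hψ'cont).abs)).add (hψ'cont.pow 2)).div_const T)
  have hQz : ∀ s : ℝ, 2 < |s| → Q s = 0 := by
    intro s hs
    show α^2 * ψ s^2 + (2*α*|ψ s * deriv ψ s| + (deriv ψ s)^2)/T = 0
    rw [hψzero s hs.le, hψ'zero s hs]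
    simp
  have hQint : Integrable Q := hco_integrable hQcont hQz
  have hQaffint : Integrable (fun t : ℝ => Q ((t+L)/T)) := by
    apply hco_integrable (hQcont.comp hAff) (A := 2*T + |L|)
    intro t ht
    apply hQz
    rw [abs_div, abs_of_pos hT0, lt_div_iff₀ hT0]
    linarith [habs t ht]
  have hψ2int : Integrable (fun s : ℝ => ψ s ^ 2) :=
    hco_integrable (hψcont.pow 2) (A := 2)
      (fun x hx => by rw [hψzero x hx.le]; ring)
  -- I₂ : the gradient term
  have hS2 : (2:ℝ) ≤ hcoS := hco_S_pos
  have hSpos : (0:ℝ) < hcoS := by linarith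
  have hI2a : (∫ x in Ω, p x * ‖gradient u x‖^2)
      ≤ p₂ * ∫ x : EuclideanSpace ℝ (Fin n), ‖gradient u x‖^2 := by
    have hstep1 : (∫ x in Ω, p x * ‖gradient u x‖^2)
        ≤ ∫ x in Ω, p₂ * ‖gradient u x‖^2 := by
      apply setIntegral_mono_on
      · apply Integrable.mono' ((hgradint.const_mul p₂).restrict (s := Ω))
        · exact (hpm.aestronglyMeasurable.mul hgradcont.aestronglyMeasurable).restrict
        · refine ae_restrict_of_forall_mem hΩo.measurableSet ?_
          intro x hx
          rw [Real.norm_eq_abs, abs_mul, abs_of_pos (hp x hx).1,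
            abs_of_nonneg (by positivity : (0:ℝ) ≤ ‖gradient u x‖^2)]
          exact mul_le_mul_of_nonneg_right (hp x hx).2 (by positivity)
      · exact (hgradint.const_mul p₂).integrableOn
      · exact hΩo.measurableSet
      · intro x hx
        exact mul_le_mul_of_nonneg_right (hp x hx).2 (by positivity)
    calc (∫ x in Ω, p x * ‖gradient u x‖^2) ≤ ∫ x in Ω, p₂ * ‖gradient u x‖^2 := hstep1
      _ = p₂ * ∫ x in Ω, ‖gradient u x‖^2 := integral_const_mul _ _
      _ ≤ p₂ * ∫ x : EuclideanSpace ℝ (Fin n), ‖gradient u x‖^2 := by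
          apply mul_le_mul_of_nonneg_left _ hp₂.le
          exact setIntegral_le_integral hgradint
            (Eventually.of_forall (fun x => by positivity))
  have hI2b : (∫ x : EuclideanSpace ℝ (Fin n), ‖gradient u x‖^2)
      = c * ∫ r in Ioi (0:ℝ), r^(n-1) * ((D (Real.log r))^2 / r^2) := by
    rw [← hpolar (fun r => (D (Real.log r))^2 / r^2)]
    simp only [hgradeq]
  have h1d2 : (∫ r in Ioi (0:ℝ), r^(n-1) * ((D (Real.log r))^2 / r^2))
      = ∫ t : ℝ, (P t)^2 := by
    rw [hco_integral_Ioi]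
    congr 1
    funext t
    show Real.exp t * (Real.exp t ^ (n-1) * ((D (Real.log (Real.exp t)))^2 / Real.exp t ^ 2))
      = (P t)^2
    rw [Real.log_exp]
    exact hco_pt n hn t (P t)
  have h1d2b : (∫ t : ℝ, (P t)^2) ≤ T * (α^2 * hcoS) + hcoK α := by
    have hmono : (∫ t : ℝ, (P t)^2) ≤ ∫ t : ℝ, Q ((t+L)/T) := by
      apply integral_mono hP2int hQaffint
      intro t
      show (-α * ψ ((t+L)/T) + deriv ψ ((t+L)/T) / T)^2
        ≤ α^2 * ψ ((t+L)/T)^2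
          + (2*α*|ψ ((t+L)/T) * deriv ψ ((t+L)/T)| + (deriv ψ ((t+L)/T))^2)/T
      exact hco_sq_bound α (deriv ψ ((t+L)/T)) (ψ ((t+L)/T)) T hα0 hT
    have hcomp : (∫ t : ℝ, Q ((t+L)/T)) = |T| * ∫ s : ℝ, Q s :=
      hco_integral_comp_affine Q L T
    have hQ2int : Integrable (fun s : ℝ => 2*α*|ψ s * deriv ψ s| + (deriv ψ s)^2) := by
      apply hco_integrable
        ((continuous_const.mul ((hψcont.mul hψ'cont).abs)).add (hψ'cont.pow 2)) (A := 2)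
      intro x hx
      show 2*α*|ψ x * deriv ψ x| + (deriv ψ x)^2 = 0
      rw [hψzero x hx.le, hψ'zero x hx]
      simp
    have hQQ : (∫ s : ℝ, Q s) = α^2 * hcoS + (hcoK α) / T := by
      show (∫ s : ℝ, (α^2 * ψ s^2 + (2*α*|ψ s * deriv ψ s| + (deriv ψ s)^2)/T)) = _
      rw [integral_add (hψ2int.const_mul _) (hQ2int.div_const T),
        integral_const_mul, integral_div]
      rfl
    calc (∫ t : ℝ, (P t)^2) ≤ ∫ t : ℝ, Q ((t+L)/T) := hmono
      _ = |T| * (α^2 * hcoS + (hcoK α) / T) := by rw [hcomp, hQQ]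
      _ = T * (α^2 * hcoS) + hcoK α := by
          rw [abs_of_pos hT0]; field_simp
  -- I₁ : the Hardy term
  have hTS : (∫ t : ℝ, (ψ ((t+L)/T))^2) = T * hcoS := by
    have h := hco_integral_comp_affine (fun s => ψ s^2) L T
    rw [abs_of_pos hT0] at h
    exact h
  have hI1 : (∫ x in Ω, (u x)^2/‖x‖^2) = c * (T * hcoS) := by
    have hstep0 : (∫ x in Ω, (u x)^2/‖x‖^2)
        = ∫ x : EuclideanSpace ℝ (Fin n), (u x)^2/‖x‖^2 := by
      apply setIntegral_eq_integral_of_forall_compl_eq_zero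
      intro x hx
      rw [image_eq_zero_of_notMem_tsupport (fun hmem => hx (hu_in hmem))]
      simp
    have hstep1 : (∫ x : EuclideanSpace ℝ (Fin n), (u x)^2/‖x‖^2)
        = c * ∫ r in Ioi (0:ℝ), r^(n-1) * ((G (Real.log r))^2 / r^2) :=
      hpolar (fun r => (G (Real.log r))^2 / r^2)
    have hstep2 : (∫ r in Ioi (0:ℝ), r^(n-1) * ((G (Real.log r))^2 / r^2))
        = ∫ t : ℝ, (ψ ((t+L)/T))^2 := by
      rw [hco_integral_Ioi]
      congr 1
      funext t
      show Real.exp t * (Real.exp t ^ (n-1) * ((G (Real.log (Real.exp t)))^2 / Real.exp t ^ 2))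
        = (ψ ((t+L)/T))^2
      rw [Real.log_exp]
      exact hco_pt n hn t (ψ ((t+L)/T))
    rw [hstep0, hstep1, hstep2, hTS]
  -- I₃ : the zeroth order term
  have hI3nonneg : 0 ≤ ∫ x in Ω, (u x)^2 :=
    setIntegral_nonneg hΩo.measurableSet (fun x _ => sq_nonneg _)
  have hψaffint : Integrable (fun t : ℝ => (ψ ((t+L)/T))^2) := by
    apply hco_integrable ((hψcont.comp hAff).pow 2) (A := 2*T + |L|)
    intro t ht
    show (ψ ((t+L)/T))^2 = 0
    rw [hψz t (habs t ht).le]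
    ring
  have hexpint : Integrable (fun t : ℝ => Real.exp (2*t) * (ψ ((t+L)/T))^2) := by
    apply hco_integrable ((Real.continuous_exp.comp (continuous_const.mul continuous_id)).mul
      ((hψcont.comp hAff).pow 2)) (A := 2*T + |L|)
    intro t ht
    show Real.exp (2*t) * (ψ ((t+L)/T))^2 = 0
    rw [hψz t (habs t ht).le]
    ring
  have hI3 : (∫ x in Ω, (u x)^2) ≤ c * (Real.exp (2*(2*T - L)) * (T * hcoS)) := by
    have hstep0 : (∫ x in Ω, (u x)^2) = ∫ x : EuclideanSpace ℝ (Fin n), (u x)^2 := by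
      apply setIntegral_eq_integral_of_forall_compl_eq_zero
      intro x hx
      rw [image_eq_zero_of_notMem_tsupport (fun hmem => hx (hu_in hmem))]
      simp
    have hstep1 : (∫ x : EuclideanSpace ℝ (Fin n), (u x)^2)
        = c * ∫ r in Ioi (0:ℝ), r^(n-1) * (G (Real.log r))^2 :=
      hpolar (fun r => (G (Real.log r))^2)
    have hstep2 : (∫ r in Ioi (0:ℝ), r^(n-1) * (G (Real.log r))^2)
        = ∫ t : ℝ, Real.exp (2*t) * (ψ ((t+L)/T))^2 := by
      rw [hco_integral_Ioi]
      congr 1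
      funext t
      show Real.exp t * (Real.exp t ^ (n-1) * (G (Real.log (Real.exp t)))^2)
        = Real.exp (2*t) * (ψ ((t+L)/T))^2
      rw [Real.log_exp]
      exact hco_pt3 n hn t (ψ ((t+L)/T))
    have hstep3 : (∫ t : ℝ, Real.exp (2*t) * (ψ ((t+L)/T))^2)
        ≤ Real.exp (2*(2*T-L)) * (T * hcoS) := by
      have hmono : (∫ t : ℝ, Real.exp (2*t) * (ψ ((t+L)/T))^2)
          ≤ ∫ t : ℝ, Real.exp (2*(2*T-L)) * (ψ ((t+L)/T))^2 := by
        apply integral_mono hexpint (hψaffint.const_mul _)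
        intro t
        show Real.exp (2*t) * (ψ ((t+L)/T))^2 ≤ Real.exp (2*(2*T-L)) * (ψ ((t+L)/T))^2
        rcases eq_or_ne (ψ ((t+L)/T)) 0 with h | h
        · rw [h]
          simp
        · have habs2 : |(t+L)/T| < 2 := hψne _ h
          have ht1 : (t+L)/T < 2 := lt_of_le_of_lt (le_abs_self _) habs2
          rw [div_lt_iff₀ hT0] at ht1
          apply mul_le_mul_of_nonneg_right _ (sq_nonneg _)
          apply Real.exp_le_exp.mpr
          linarith
      calc (∫ t : ℝ, Real.exp (2*t) * (ψ ((t+L)/T))^2)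
          ≤ ∫ t : ℝ, Real.exp (2*(2*T-L)) * (ψ ((t+L)/T))^2 := hmono
        _ = Real.exp (2*(2*T-L)) * ∫ t : ℝ, (ψ ((t+L)/T))^2 := integral_const_mul _ _
        _ = Real.exp (2*(2*T-L)) * (T * hcoS) := by rw [hTS]
    rw [hstep0, hstep1]
    exact mul_le_mul_of_nonneg_left (hstep2 ▸ hstep3) hcpos.le
  -- exponential bounds
  have hexpb : Real.exp (2*(2*T - L)) ≤ Real.exp (-(2*T)) :=
    Real.exp_le_exp.mpr (by linarith [hL3])
  have hexpT : Real.exp (-(2*T)) * T ≤ 1 := by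
    rw [Real.exp_neg]
    have h1 : T ≤ Real.exp (2*T) := by
      have := Real.add_one_le_exp (2*T)
      linarith
    calc (Real.exp (2*T))⁻¹ * T ≤ (Real.exp (2*T))⁻¹ * Real.exp (2*T) :=
          mul_le_mul_of_nonneg_left h1 (by positivity)
      _ = 1 := inv_mul_cancel₀ (Real.exp_pos _).ne'
  -- assembly
  have key := hineq u hu_smooth hu_compact hu_in
  rw [hI1] at key
  have hI2 : (∫ x in Ω, p x * ‖gradient u x‖^2)
      ≤ p₂ * (c * (T * (α^2 * hcoS) + hcoK α)) := by
    calc (∫ x in Ω, p x * ‖gradient u x‖^2)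
        ≤ p₂ * ∫ x : EuclideanSpace ℝ (Fin n), ‖gradient u x‖^2 := hI2a
      _ = p₂ * (c * ∫ t : ℝ, (P t)^2) := by rw [hI2b, h1d2]
      _ ≤ p₂ * (c * (T * (α^2 * hcoS) + hcoK α)) := by
          apply mul_le_mul_of_nonneg_left _ hp₂.le
          exact mul_le_mul_of_nonneg_left h1d2b hcpos.le
  have hCt : -(C * ∫ x in Ω, (u x)^2)
      ≤ |C| * (c * (Real.exp (-(2*T)) * (T * hcoS))) := by
    calc -(C * ∫ x in Ω, (u x)^2) = (-C) * ∫ x in Ω, (u x)^2 := by ring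
      _ ≤ |C| * ∫ x in Ω, (u x)^2 := mul_le_mul_of_nonneg_right (neg_le_abs C) hI3nonneg
      _ ≤ |C| * (c * (Real.exp (2*(2*T-L)) * (T * hcoS))) :=
          mul_le_mul_of_nonneg_left hI3 (abs_nonneg C)
      _ ≤ |C| * (c * (Real.exp (-(2*T)) * (T * hcoS))) := by
          apply mul_le_mul_of_nonneg_left _ (abs_nonneg C)
          apply mul_le_mul_of_nonneg_left _ hcpos.le
          exact mul_le_mul_of_nonneg_right hexpb (by positivity)
  have hmain : μ * (c * (T * hcoS)) ≤ p₂ * (c * (T * (α^2*hcoS) + hcoK α))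
      + |C| * (c * (Real.exp (-(2*T)) * (T * hcoS))) := by
    linarith [key, hI2, hCt]
  have hBpos : 0 < c * (T * hcoS) := by positivity
  have htarget : p₂ * (c * (T * (α^2*hcoS) + hcoK α))
        + |C| * (c * (Real.exp (-(2*T)) * (T * hcoS)))
      ≤ (p₂ * α^2 + (p₂ * (hcoK α / hcoS) + |C|)/T) * (c * (T * hcoS)) := by
    have hexpand : (p₂ * α^2 + (p₂ * (hcoK α / hcoS) + |C|)/T) * (c * (T * hcoS))
        = p₂ * (c * (T * (α^2*hcoS))) + p₂ * (hcoK α) * c + |C| * (c * hcoS) := by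
      field_simp
      ring
    rw [hexpand]
    have h1 : |C| * (c * (Real.exp (-(2*T)) * (T * hcoS))) ≤ |C| * (c * hcoS) := by
      apply mul_le_mul_of_nonneg_left _ (abs_nonneg C)
      apply mul_le_mul_of_nonneg_left _ hcpos.le
      calc Real.exp (-(2*T)) * (T * hcoS) = (Real.exp (-(2*T)) * T) * hcoS := by ring
        _ ≤ 1 * hcoS := mul_le_mul_of_nonneg_right hexpT hSpos.le
        _ = hcoS := one_mul _
    have h2 : p₂ * (c * (T * (α^2*hcoS) + hcoK α))
        = p₂ * (c * (T * (α^2*hcoS))) + p₂ * (hcoK α) * c := by ring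
    linarith
  exact le_of_mul_le_mul_right (hmain.trans htarget) hBpos


end HcoAux

/-- If `μ ∫ u²/|x|² ≤ ∫ p |∇u|² − C ∫ u²` holds for all `u ∈ H¹₀(Ω)`, with
`0 < p ≤ p₂` on `Ω` and `B(0,τ₀) ⊆ Ω`, then `μ ≤ p₂ (n-2)²/4`. -/
theorem hardy_constant_obstruction (n : ℕ) (hn : 3 ≤ n)
    (Ω : Set (EuclideanSpace ℝ (Fin n))) (hΩo : IsOpen Ω) (hΩb : Bornology.IsBounded Ω)
    (h0 : 0 ∈ Ω) (μ C p₂ τ₀ : ℝ) (hp₂ : 0 < p₂) (hτ₀ : 0 < τ₀)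
    (hball : Metric.ball (0 : EuclideanSpace ℝ (Fin n)) τ₀ ⊆ Ω)
    (p : EuclideanSpace ℝ (Fin n) → ℝ) (hpm : Measurable p)
    (hp : ∀ x ∈ Ω, 0 < p x ∧ p x ≤ p₂)
    (hineq : ∀ u : EuclideanSpace ℝ (Fin n) → ℝ,
      ContDiff ℝ 1 u → HasCompactSupport u → tsupport u ⊆ Ω →
      μ * (∫ x in Ω, (u x) ^ 2 / ‖x‖ ^ 2)
        ≤ (∫ x in Ω, p x * ‖gradient u x‖ ^ 2) - C * ∫ x in Ω, (u x) ^ 2) :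
    μ ≤ p₂ * (n - 2 : ℝ) ^ 2 / 4 := by
  have key : ∀ T : ℝ, 1 ≤ T → μ ≤ p₂ * (((n:ℝ)-2)/2)^2
      + (p₂ * (hcoK (((n:ℝ)-2)/2) / hcoS) + |C|) / T :=
    fun T hT => hco_key n hn Ω hΩo μ C p₂ τ₀ hp₂ hτ₀ hball p hpm hp hineq T hT
  set M : ℝ := p₂ * (hcoK (((n:ℝ)-2)/2) / hcoS) + |C| with hM
  have hn3 : (3:ℝ) ≤ (n:ℝ) := by exact_mod_cast hn
  have hM0 : 0 ≤ M := by
    apply add_nonneg _ (abs_nonneg C)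
    apply mul_nonneg hp₂.le
    exact div_nonneg (hco_K_nonneg (by linarith)) (by linarith [hco_S_pos])
  have hfinal : μ ≤ p₂ * (((n:ℝ)-2)/2)^2 := by
    apply le_of_forall_pos_le_add
    intro ε hε
    have hT : (1:ℝ) ≤ max 1 (M/ε) := le_max_left _ _
    have hTpos : (0:ℝ) < max 1 (M/ε) := lt_of_lt_of_le one_pos hT
    have h := key _ hT
    have hMT : M / max 1 (M/ε) ≤ ε := by
      rw [div_le_iff₀ hTpos]
      calc M = (M/ε) * ε := (div_mul_cancel₀ M hε.ne').symm
        _ ≤ max 1 (M/ε) * ε := mul_le_mul_of_nonneg_right (le_max_right _ _) hε.le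
        _ = ε * max 1 (M/ε) := mul_comm _ _
    linarith
  calc μ ≤ p₂ * (((n:ℝ)-2)/2)^2 := hfinal
    _ = p₂ * ((n:ℝ)-2)^2/4 := by ring
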